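/- arXiv:2303.17832 — 2 statements merged into one kernel-verified Lean document; each statement's English description precedes it below -/
import Mathlib

section
/- Let (X,Y) be a pair of random variables with E[Y⁴] < ∞ and g₁(x) = E[Y|X=x]. Then Var(g₁(X)(2Y − g₁(X))) = 4·Var(Y·g₁(X)) − 3·Var(g₁(X)²). -/
open MeasureTheory ProbabilityTheory Filter
open scoped ENNReal NNReal

section AuxVarEff

private lemma memLp_mul_aux {Ω : Type*} [MeasurableSpace Ω] {μ : Measure Ω} {f g : Ω → ℝ}
    {p q r : ℝ≥0∞} (hf : MemLp f q μ) (hg : MemLp g r μ) (h : 1 / p = 1 / q + 1 / r) :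
    MemLp (fun ω => f ω * g ω) p μ := by
  haveI : ENNReal.HolderTriple q r p := ⟨by simpa [one_div] using h.symm⟩
  have := hg.smul (φ := f) (r := p) hf
  exact this

private lemma aux_clamp (g n : ℝ) (hn : 0 ≤ n) :
    (max (min g n) (-n)) ^ 4 ≤ (max (min g n) (-n)) ^ 3 * g := by
  set t := max (min g n) (-n) with ht
  have key : 0 ≤ t * (g - t) := by
    rcases le_total 0 g with h | h
    · have h1 : t ≤ g := max_le (min_le_left _ _) (by linarith)
      have h0 : 0 ≤ t := le_max_of_le_left (le_min h hn)
      exact mul_nonneg h0 (by linarith)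
    · have hgn : min g n = g := min_eq_left (by linarith)
      have h1 : g ≤ t := by rw [ht, hgn]; exact le_max_left _ _
      have h0 : t ≤ 0 := by rw [ht, hgn]; exact max_le h (by linarith)
      nlinarith [mul_nonneg (neg_nonneg.2 h0) (sub_nonneg.2 h1)]
  nlinarith [mul_nonneg key (sq_nonneg t), sq_nonneg t]

private lemma aux_young (s y : ℝ) : s ^ 3 * y ≤ y ^ 4 / 4 + 3 * s ^ 4 / 4 := by
  nlinarith [mul_nonneg (sq_nonneg (y - s)) (by positivity : (0:ℝ) ≤ (y + s) ^ 2 + 2 * s ^ 2)]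

/-- Conditional Jensen-type bound: if `Y ∈ L⁴` then `E[Y|m] ∈ L⁴`. -/
private lemma condexp_memLp_four {Ω : Type*} {m : MeasurableSpace Ω} [m0 : MeasurableSpace Ω]
    (hm : m ≤ m0) (μ : Measure Ω) [IsProbabilityMeasure μ] {Y : Ω → ℝ}
    (hY : MemLp Y 4 μ) : MemLp (μ[Y|m]) 4 μ := by
  set g : Ω → ℝ := μ[Y|m] with hgdef
  have hgsm : StronglyMeasurable[m] g := stronglyMeasurable_condExp
  have hgm : Measurable[m] g := hgsm.measurable
  have hgm0 : Measurable g := (hgsm.mono hm).measurable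
  have hgint : Integrable g μ := integrable_condExp
  have hYint : Integrable Y μ := hY.integrable (by norm_num)
  have hY4 : Integrable (fun ω => (Y ω) ^ 4) μ := by
    have h2 : MemLp (fun ω => Y ω * Y ω) 2 μ := memLp_mul_aux hY hY (by rw [ENNReal.div_add_div_same, ENNReal.div_eq_div_iff] <;> norm_num)
    have h1 : MemLp (fun ω => (Y ω * Y ω) * (Y ω * Y ω)) 1 μ :=
      memLp_mul_aux h2 h2 (by rw [ENNReal.div_add_div_same, ENNReal.div_eq_div_iff] <;> norm_num)
    exact (memLp_one_iff_integrable.mp h1).congr (ae_of_all _ fun ω => by ring)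
  set t : ℕ → Ω → ℝ := fun n ω => max (min (g ω) n) (-(n : ℝ)) with htdef
  have htm : ∀ n, Measurable[m] (t n) := fun n =>
    (hgm.min measurable_const).max measurable_const
  have htmeas : ∀ n, Measurable (t n) := fun n => ((htm n).mono hm le_rfl)
  have htb : ∀ n ω, |t n ω| ≤ (n : ℝ) := by
    intro n ω
    rw [abs_le]
    exact ⟨le_max_right _ _, max_le (min_le_right _ _) (by simp [neg_le_self_iff])⟩
  have htint4 : ∀ n, Integrable (fun ω => (t n ω) ^ 4) μ := by
    intro n
    refine memLp_one_iff_integrable.mp ?_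
    refine MemLp.of_bound (((htmeas n).pow_const 4).aestronglyMeasurable) ((n : ℝ) ^ 4)
      (ae_of_all _ fun ω => ?_)
    rw [Real.norm_eq_abs, abs_pow]
    exact pow_le_pow_left₀ (abs_nonneg _) (htb n ω) 4
  have key : ∀ n, ∫ ω, (t n ω) ^ 4 ∂μ ≤ ∫ ω, (Y ω) ^ 4 ∂μ := by
    intro n
    have ht3bdd : ∀ᵐ ω ∂μ, ‖(t n ω) ^ 3‖ ≤ (n : ℝ) ^ 3 := by
      refine ae_of_all _ fun ω => ?_
      rw [Real.norm_eq_abs, abs_pow]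
      exact pow_le_pow_left₀ (abs_nonneg _) (htb n ω) 3
    have hYt3 : Integrable (fun ω => (t n ω) ^ 3 * Y ω) μ :=
      hYint.bdd_mul (((htmeas n).pow_const 3).aestronglyMeasurable) ht3bdd
    have hgt3 : Integrable (fun ω => (t n ω) ^ 3 * g ω) μ :=
      hgint.bdd_mul (((htmeas n).pow_const 3).aestronglyMeasurable) ht3bdd
    have ht3sm : StronglyMeasurable[m] (fun ω => (t n ω) ^ 3) :=
      ((htm n).pow_const 3).stronglyMeasurable
    have hpull : μ[(fun ω => (t n ω) ^ 3) * Y|m] =ᵐ[μ] (fun ω => (t n ω) ^ 3) * μ[Y|m] :=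
      condExp_mul_of_stronglyMeasurable_left ht3sm hYt3 hYint
    have step1 : ∫ ω, (t n ω) ^ 4 ∂μ ≤ ∫ ω, (t n ω) ^ 3 * g ω ∂μ :=
      integral_mono (htint4 n) hgt3 fun ω => aux_clamp (g ω) n (Nat.cast_nonneg n)
    have step2 : ∫ ω, (t n ω) ^ 3 * g ω ∂μ = ∫ ω, (t n ω) ^ 3 * Y ω ∂μ := by
      calc ∫ ω, (t n ω) ^ 3 * g ω ∂μ
          = ∫ ω, ((fun ω => (t n ω) ^ 3) * μ[Y|m]) ω ∂μ := rfl
        _ = ∫ ω, (μ[(fun ω => (t n ω) ^ 3) * Y|m]) ω ∂μ :=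
            (integral_congr_ae hpull.symm)
        _ = ∫ ω, ((fun ω => (t n ω) ^ 3) * Y) ω ∂μ := integral_condExp hm
        _ = ∫ ω, (t n ω) ^ 3 * Y ω ∂μ := rfl
    have step3 : ∫ ω, (t n ω) ^ 3 * Y ω ∂μ
        ≤ ∫ ω, ((Y ω) ^ 4 / 4 + 3 * (t n ω) ^ 4 / 4) ∂μ := by
      refine integral_mono hYt3 ?_ fun ω => aux_young (t n ω) (Y ω)
      exact (hY4.div_const 4).add (((htint4 n).const_mul 3).div_const 4)
    have step4 : ∫ ω, ((Y ω) ^ 4 / 4 + 3 * (t n ω) ^ 4 / 4) ∂μ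
        = (∫ ω, (Y ω) ^ 4 ∂μ) / 4 + 3 * (∫ ω, (t n ω) ^ 4 ∂μ) / 4 := by
      rw [integral_add (hY4.div_const 4) (((htint4 n).const_mul 3).div_const 4),
        integral_div, integral_div, integral_const_mul]
    linarith [step1, step2.le, step2.ge, step3, step4.le, step4.ge]
  -- conclude finiteness of the fourth moment of g
  refine ⟨(hgsm.mono hm).aestronglyMeasurable, ?_⟩
  rw [eLpNorm_eq_lintegral_rpow_enorm_toReal (by norm_num) (by norm_num)]
  refine ENNReal.rpow_lt_top_of_nonneg (by norm_num) ?_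
  refine LT.lt.ne ?_
  have hpt : ∀ ω, (‖g ω‖₊ : ℝ≥0∞) ^ (ENNReal.toReal 4)
      = liminf (fun n => ENNReal.ofReal ((t n ω) ^ 4)) atTop := by
    intro ω
    have hev : ∀ᶠ n : ℕ in atTop, ENNReal.ofReal ((t n ω) ^ 4)
        = (‖g ω‖₊ : ℝ≥0∞) ^ (ENNReal.toReal 4) := by
      filter_upwards [eventually_ge_atTop ⌈|g ω|⌉₊] with n hn
      have hgn : |g ω| ≤ (n : ℝ) := le_trans (Nat.le_ceil _) (Nat.cast_le.mpr hn)
      have htg : t n ω = g ω := by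
        rw [htdef]
        simp only
        rw [min_eq_left (le_trans (le_abs_self _) hgn),
          max_eq_left (by linarith [neg_abs_le (g ω)])]
      rw [htg]
      have h1 : (g ω) ^ 4 = |g ω| ^ 4 := by
        rw [← abs_pow, abs_of_nonneg (by positivity)]
      rw [h1, ENNReal.ofReal_pow (abs_nonneg _), ← Real.norm_eq_abs,
        ofReal_norm, enorm_eq_nnnorm]
      rw [show ENNReal.toReal 4 = ((4:ℕ):ℝ) by norm_num, ENNReal.rpow_natCast]
    exact (Tendsto.liminf_eq (tendsto_const_nhds.congr' (hev.mono fun n h => h.symm))).symm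
  calc ∫⁻ ω, (‖g ω‖₊ : ℝ≥0∞) ^ (ENNReal.toReal 4) ∂μ
      = ∫⁻ ω, liminf (fun n => ENNReal.ofReal ((t n ω) ^ 4)) atTop ∂μ :=
        lintegral_congr fun ω => hpt ω
    _ ≤ liminf (fun n => ∫⁻ ω, ENNReal.ofReal ((t n ω) ^ 4) ∂μ) atTop :=
        lintegral_liminf_le fun n => ((htmeas n).pow_const 4).ennreal_ofReal
    _ ≤ ENNReal.ofReal (∫ ω, (Y ω) ^ 4 ∂μ) := by
        refine liminf_le_of_le ?_ ?_
        · isBoundedDefault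
        · intro b hb
          obtain ⟨n, hn⟩ := hb.exists
          refine le_trans hn ?_
          rw [← ofReal_integral_eq_lintegral_ofReal (htint4 n)
            (ae_of_all _ fun ω => by positivity)]
          exact ENNReal.ofReal_le_ofReal (key n)
    _ < ⊤ := ENNReal.ofReal_lt_top

end AuxVarEff

private theorem variance_efficient_eq_aux {Ω : Type*} {m : MeasurableSpace Ω}
    [m0 : MeasurableSpace Ω] (hm : m ≤ m0) (μ : Measure Ω) [IsProbabilityMeasure μ]
    (Y : Ω → ℝ) (hY : MemLp Y 4 μ) :
    variance (fun ω => (μ[Y|m]) ω * (2 * Y ω - (μ[Y|m]) ω)) μ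
      = 4 * variance (fun ω => Y ω * (μ[Y|m]) ω) μ
        - 3 * variance (fun ω => ((μ[Y|m]) ω) ^ 2) μ := by
  set g : Ω → ℝ := μ[Y|m] with hgdef
  have hgsm : StronglyMeasurable[m] g := stronglyMeasurable_condExp
  have hYint : Integrable Y μ := hY.integrable (by norm_num)
  have hg4 : MemLp g 4 μ := condexp_memLp_four hm μ hY
  have hYg : MemLp (fun ω => Y ω * g ω) 2 μ := memLp_mul_aux hY hg4 (by rw [ENNReal.div_add_div_same, ENNReal.div_eq_div_iff] <;> norm_num)
  have hg2 : MemLp (fun ω => (g ω) ^ 2) 2 μ :=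
    (memLp_mul_aux hg4 hg4 (by rw [ENNReal.div_add_div_same, ENNReal.div_eq_div_iff] <;> norm_num)).ae_eq (ae_of_all _ fun ω => by ring)
  have hA : MemLp (fun ω => g ω * (2 * Y ω - g ω)) 2 μ := by
    have := ((hYg.const_mul 2).sub hg2)
    exact this.ae_eq (ae_of_all _ fun ω => by simp [Pi.sub_apply]; ring)
  -- integrability of all the products appearing below
  have hYgint : Integrable (fun ω => Y ω * g ω) μ := hYg.integrable one_le_two
  have hg2int : Integrable (fun ω => (g ω) ^ 2) μ := hg2.integrable one_le_two
  have hYg2int : Integrable (fun ω => (Y ω * g ω) ^ 2) μ := hYg.integrable_sq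
  have hg4int : Integrable (fun ω => (g ω) ^ 4) μ :=
    hg2.integrable_sq.congr (ae_of_all _ fun ω => by ring)
  have hYg3int : Integrable (fun ω => Y ω * (g ω) ^ 3) μ := by
    have h1 : MemLp (fun ω => (Y ω * g ω) * (g ω) ^ 2) 1 μ :=
      memLp_mul_aux hYg hg2 (by rw [ENNReal.div_add_div_same, ENNReal.div_eq_div_iff] <;> norm_num)
    exact (memLp_one_iff_integrable.mp h1).congr (ae_of_all _ fun ω => by ring)
  -- pull-out identities
  have hb : ∫ ω, Y ω * g ω ∂μ = ∫ ω, (g ω) ^ 2 ∂μ := by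
    have hgY : Integrable ((fun ω => g ω) * Y) μ :=
      hYgint.congr (ae_of_all _ fun ω => by simp [Pi.mul_apply]; ring)
    have hpull : μ[(fun ω => g ω) * Y|m] =ᵐ[μ] (fun ω => g ω) * μ[Y|m] :=
      condExp_mul_of_stronglyMeasurable_left hgsm hgY hYint
    calc ∫ ω, Y ω * g ω ∂μ
        = ∫ ω, ((fun ω => g ω) * Y) ω ∂μ := by
          refine integral_congr_ae (ae_of_all _ fun ω => ?_)
          simp [Pi.mul_apply]; ring
      _ = ∫ ω, (μ[(fun ω => g ω) * Y|m]) ω ∂μ := (integral_condExp hm).symm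
      _ = ∫ ω, ((fun ω => g ω) * μ[Y|m]) ω ∂μ := integral_congr_ae hpull
      _ = ∫ ω, (g ω) ^ 2 ∂μ := by
          refine integral_congr_ae (ae_of_all _ fun ω => ?_)
          simp [Pi.mul_apply]; ring
  have he : ∫ ω, Y ω * (g ω) ^ 3 ∂μ = ∫ ω, (g ω) ^ 4 ∂μ := by
    have hg3sm : StronglyMeasurable[m] (fun ω => (g ω) ^ 3) :=
      (hgsm.measurable.pow_const 3).stronglyMeasurable
    have hg3Y : Integrable ((fun ω => (g ω) ^ 3) * Y) μ :=
      hYg3int.congr (ae_of_all _ fun ω => by simp [Pi.mul_apply]; ring)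
    have hpull : μ[(fun ω => (g ω) ^ 3) * Y|m] =ᵐ[μ] (fun ω => (g ω) ^ 3) * μ[Y|m] :=
      condExp_mul_of_stronglyMeasurable_left hg3sm hg3Y hYint
    calc ∫ ω, Y ω * (g ω) ^ 3 ∂μ
        = ∫ ω, ((fun ω => (g ω) ^ 3) * Y) ω ∂μ := by
          refine integral_congr_ae (ae_of_all _ fun ω => ?_)
          simp [Pi.mul_apply]; ring
      _ = ∫ ω, (μ[(fun ω => (g ω) ^ 3) * Y|m]) ω ∂μ := (integral_condExp hm).symm
      _ = ∫ ω, ((fun ω => (g ω) ^ 3) * μ[Y|m]) ω ∂μ := integral_congr_ae hpull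
      _ = ∫ ω, (g ω) ^ 4 ∂μ := by
          refine integral_congr_ae (ae_of_all _ fun ω => ?_)
          simp [Pi.mul_apply]; ring
  -- expand the variances
  rw [variance_eq_sub hA, variance_eq_sub hYg, variance_eq_sub hg2]
  simp only [Pi.pow_apply]
  have hA2 : ∫ ω, (g ω * (2 * Y ω - g ω)) ^ 2 ∂μ
      = 4 * ∫ ω, (Y ω * g ω) ^ 2 ∂μ - 4 * ∫ ω, Y ω * (g ω) ^ 3 ∂μ + ∫ ω, (g ω) ^ 4 ∂μ := by
    have : ∫ ω, (g ω * (2 * Y ω - g ω)) ^ 2 ∂μ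
        = ∫ ω, (4 * (Y ω * g ω) ^ 2 - 4 * (Y ω * (g ω) ^ 3) + (g ω) ^ 4) ∂μ :=
      integral_congr_ae (ae_of_all _ fun ω => by ring)
    have i1 : Integrable (fun ω => 4 * (Y ω * g ω) ^ 2 - 4 * (Y ω * (g ω) ^ 3)) μ :=
      (hYg2int.const_mul 4).sub (hYg3int.const_mul 4)
    have i2 : Integrable (fun ω => 4 * (Y ω * g ω) ^ 2) μ := hYg2int.const_mul 4
    have i3 : Integrable (fun ω => 4 * (Y ω * (g ω) ^ 3)) μ := hYg3int.const_mul 4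
    rw [this, integral_add i1 hg4int, integral_sub i2 i3,
      integral_const_mul, integral_const_mul]
  have hA1 : ∫ ω, g ω * (2 * Y ω - g ω) ∂μ
      = 2 * ∫ ω, Y ω * g ω ∂μ - ∫ ω, (g ω) ^ 2 ∂μ := by
    have : ∫ ω, g ω * (2 * Y ω - g ω) ∂μ
        = ∫ ω, (2 * (Y ω * g ω) - (g ω) ^ 2) ∂μ :=
      integral_congr_ae (ae_of_all _ fun ω => by ring)
    have i1 : Integrable (fun ω => 2 * (Y ω * g ω)) μ := hYgint.const_mul 2
    rw [this, integral_sub i1 hg2int, integral_const_mul]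
  have hcc : ∫ ω, ((g ω) ^ 2) ^ 2 ∂μ = ∫ ω, (g ω) ^ 4 ∂μ :=
    integral_congr_ae (ae_of_all _ fun ω => by ring)
  rw [hA2, hA1, hb, he, hcc]
  ring

/-- If `E[Y⁴] < ∞` and `g₁(X) = E[Y|X]`, then
`Var(g₁(X)(2Y − g₁(X))) = 4·Var(Y·g₁(X)) − 3·Var(g₁(X)²)`. -/
theorem variance_efficient_eq
    {Ω E : Type*} [MeasurableSpace Ω] [MeasurableSpace E]
    (μ : Measure Ω) [IsProbabilityMeasure μ]
    (X : Ω → E) (hX : Measurable X) (Y : Ω → ℝ) (hY : MemLp Y 4 μ)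
    (g₁X : Ω → ℝ) (hg₁ : g₁X = μ[Y | MeasurableSpace.comap X ‹MeasurableSpace E›]) :
    variance (fun ω => g₁X ω * (2 * Y ω - g₁X ω)) μ
      = 4 * variance (fun ω => Y ω * g₁X ω) μ - 3 * variance (fun ω => (g₁X ω) ^ 2) μ := by
  subst hg₁
  exact variance_efficient_eq_aux hX.comap_le μ Y hY
end

section
/- For parameters a, b ∈ (1, 3/2), the beta density f_{a,b}(x) = x^{a−1}(1−x)^{b−1}/B(a,b) on [0,1] satisfies ‖f_{a,b}‖_∞ ≤ 2η, where η = (2∫₀¹ √(x(1−x)) dx)^{−1} = 1/(2 B(3/2,3/2)) with B the Beta function. -/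
open Set MeasureTheory

/-- For parameters `a, b ∈ (1, 3/2)`, the beta density
`f_{a,b}(x) = x^{a−1}(1−x)^{b−1}/B(a,b)` on `[0,1]` is bounded by `2η`, where
`η = (2∫₀¹ √(x(1−x)) dx)⁻¹`. -/
theorem beta_density_sup_bound
    (a b : ℝ) (ha : a ∈ Ioo (1:ℝ) (3/2)) (hb : b ∈ Ioo (1:ℝ) (3/2))
    (Bab : ℝ) (hBab : Bab = ∫ x in (0:ℝ)..1, x ^ (a - 1) * (1 - x) ^ (b - 1))
    (η : ℝ) (hη : η = (2 * ∫ x in (0:ℝ)..1, Real.sqrt (x * (1 - x)))⁻¹) :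
    ∀ x ∈ Icc (0:ℝ) 1, x ^ (a - 1) * (1 - x) ^ (b - 1) / Bab ≤ 2 * η := by
  set I : ℝ := ∫ x in (0:ℝ)..1, Real.sqrt (x * (1 - x)) with hI
  have ha1 : 0 < a - 1 := by linarith [ha.1]
  have ha2 : a - 1 ≤ 1/2 := by linarith [ha.2]
  have hb1 : 0 < b - 1 := by linarith [hb.1]
  have hb2 : b - 1 ≤ 1/2 := by linarith [hb.2]
  -- continuity of the integrands
  have hcont : ∀ c : ℝ, 0 < c → Continuous (fun x : ℝ => x ^ c) := by
    intro c hc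
    exact continuous_iff_continuousAt.2 fun x =>
      Real.continuousAt_rpow_const x c (Or.inr hc.le)
  have hcf : Continuous (fun x : ℝ => x ^ (a - 1) * (1 - x) ^ (b - 1)) :=
    (hcont _ ha1).mul ((hcont _ hb1).comp (continuous_const.sub continuous_id))
  have hcg : Continuous (fun x : ℝ => Real.sqrt (x * (1 - x))) :=
    (continuous_id.mul (continuous_const.sub continuous_id)).sqrt
  -- pointwise bound: sqrt(x(1-x)) ≤ x^(a-1)(1-x)^(b-1) on [0,1]
  have hpt : ∀ x ∈ Icc (0:ℝ) 1,
      Real.sqrt (x * (1 - x)) ≤ x ^ (a - 1) * (1 - x) ^ (b - 1) := by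
    intro x hx
    have hx0 : 0 ≤ x := hx.1
    have hx1 : 0 ≤ 1 - x := by linarith [hx.2]
    have hs : Real.sqrt (x * (1 - x)) = x ^ (1/2 : ℝ) * (1 - x) ^ (1/2 : ℝ) := by
      rw [Real.sqrt_eq_rpow, Real.mul_rpow hx0 hx1]
    rw [hs]
    have h1 : x ^ (1/2 : ℝ) ≤ x ^ (a - 1) := by
      rcases eq_or_lt_of_le hx0 with h | h
      · rw [← h, Real.zero_rpow (by norm_num), Real.zero_rpow (by linarith)]
      · exact Real.rpow_le_rpow_of_exponent_ge h hx.2 ha2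
    have h2 : (1 - x) ^ (1/2 : ℝ) ≤ (1 - x) ^ (b - 1) := by
      rcases eq_or_lt_of_le hx1 with h | h
      · rw [← h, Real.zero_rpow (by norm_num), Real.zero_rpow (by linarith)]
      · exact Real.rpow_le_rpow_of_exponent_ge h (by linarith [hx.1]) hb2
    exact mul_le_mul h1 h2 (Real.rpow_nonneg hx1 _) (Real.rpow_nonneg hx0 _)
  -- I ≤ Bab
  have hIB : I ≤ Bab := by
    rw [hBab, hI]
    apply intervalIntegral.integral_mono_on (by norm_num)
      (hcg.intervalIntegrable _ _) (hcf.intervalIntegrable _ _)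
    exact hpt
  -- I > 0
  have hIpos : 0 < I := by
    rw [hI]
    apply intervalIntegral.intervalIntegral_pos_of_pos_on
      (hcg.intervalIntegrable _ _) _ (by norm_num)
    intro x hx
    exact Real.sqrt_pos.2 (mul_pos hx.1 (by linarith [hx.2]))
  -- conclude
  intro x hx
  have hnum : x ^ (a - 1) * (1 - x) ^ (b - 1) ≤ 1 := by
    have h1 : x ^ (a - 1) ≤ 1 := Real.rpow_le_one hx.1 hx.2 ha1.le
    have h2 : (1 - x) ^ (b - 1) ≤ 1 :=
      Real.rpow_le_one (by linarith [hx.2]) (by linarith [hx.1]) hb1.le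
    calc x ^ (a - 1) * (1 - x) ^ (b - 1) ≤ 1 * 1 :=
          mul_le_mul h1 h2 (Real.rpow_nonneg (by linarith [hx.2]) _)
            (by norm_num)
      _ = 1 := by norm_num
  have h2η : 2 * η = I⁻¹ := by
    rw [hη]
    field_simp
  rw [h2η, inv_eq_one_div]
  exact div_le_div₀ (by norm_num) hnum hIpos hIB
end
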